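/- arXiv:2109.15148 — 3 statements merged into one kernel-verified Lean document; each statement's English description precedes it below -/
import Mathlib

section
/- Every vertex of G_p has at least |S| − 1 neighbours; consequently, the number of edges of G_p is at least |S|·(|S| − 1)·p²/2. -/
/-- The set `S ⊆ F_p` of elements whose least nonnegative representative `k`
satisfies `1 ≤ k ≤ (p-5)/6` and `k ≡ 1 (mod 3)`. -/
def Svertex (p : ℕ) : Set (ZMod p) :=
  {x | 1 ≤ x.val ∧ x.val ≤ (p - 5) / 6 ∧ x.val % 3 = 1}

/-- The vertex set `V = S × F_p × F_p` of the graph `G_p`. -/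
def Vsub (p : ℕ) : Type :=
  {v : ZMod p × ZMod p × ZMod p // v.1 ∈ Svertex p}

/-- The graph `G_p` on `V = S × F_p × F_p`: distinct vertices `x, y` are adjacent iff
`x₂ + y₃ = x₁·y₁²` and `x₃ + y₂ = x₁²·y₁`. -/
def Gp (p : ℕ) : SimpleGraph (Vsub p) where
  Adj x y := x ≠ y ∧ x.val.2.1 + y.val.2.2 = x.val.1 * y.val.1 ^ 2 ∧
    x.val.2.2 + y.val.2.1 = x.val.1 ^ 2 * y.val.1
  symm := ⟨by
    rintro x y ⟨hne, h1, h2⟩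
    exact ⟨hne.symm, by linear_combination h2, by linear_combination h1⟩⟩
  loopless := ⟨fun x h => h.1 rfl⟩

/-! Every vertex `x` has, for each `s ∈ S \ {x₁}`, the neighbour
`(s, x₁² s - x₃, x₁ s² - x₂)`; so projecting the neighbourhood of `x` to its first
coordinate covers `S \ {x₁}`, and the edge bound follows by the handshake lemma. -/

theorem SimpleGraph.card_mul_le_two_mul_ncard_edgeSet {V : Type*} [Finite V]
    (G : SimpleGraph V) {d : ℕ} (h : ∀ v, d ≤ (G.neighborSet v).ncard) :
    Nat.card V * d ≤ 2 * G.edgeSet.ncard := by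
  classical
  have := Fintype.ofFinite V
  calc Nat.card V * d = ∑ _v : V, d := by simp [Nat.card_eq_fintype_card]
    _ ≤ ∑ v, G.degree v := Finset.sum_le_sum fun v _ => (h v).trans_eq <| by
      rw [← G.card_neighborSet_eq_degree, ← Nat.card_eq_fintype_card, Nat.card_coe_set_eq]
    _ = 2 * G.edgeSet.ncard := by
      rw [G.sum_degrees_eq_twice_card_edges, ← G.coe_edgeFinset, Set.ncard_coe_finset]

theorem Svertex.ne_zero_of_mem {p : ℕ} {x : ZMod p} (hx : x ∈ Svertex p) : p ≠ 0 := by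
  rintro rfl
  obtain ⟨h1, h2, -⟩ := hx
  omega

instance Vsub.finite (p : ℕ) : Finite (Vsub p) := by
  rcases eq_or_ne p 0 with rfl | hp
  · have : IsEmpty (Vsub 0) := ⟨fun v => Svertex.ne_zero_of_mem v.prop rfl⟩
    infer_instance
  · have : NeZero p := ⟨hp⟩
    exact Subtype.finite

def Vsub.equivProd (p : ℕ) : Vsub p ≃ Svertex p × ZMod p × ZMod p where
  toFun v := (⟨v.val.1, v.prop⟩, v.val.2)
  invFun x := ⟨(x.1.1, x.2), x.1.2⟩

theorem Vsub.natCard_eq (p : ℕ) : Nat.card (Vsub p) = (Svertex p).ncard * p ^ 2 := by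
  rw [Nat.card_congr (Vsub.equivProd p), Nat.card_prod, Nat.card_prod, Nat.card_coe_set_eq,
    Nat.card_zmod]
  ring

theorem Gp.exists_adj_fst_eq {p : ℕ} (x : Vsub p) {s : ZMod p} (hs : s ∈ Svertex p)
    (hne : s ≠ x.val.1) : ∃ y, (Gp p).Adj x y ∧ y.val.1 = s :=
  ⟨⟨(s, x.val.1 ^ 2 * s - x.val.2.2, x.val.1 * s ^ 2 - x.val.2.1), hs⟩,
    ⟨fun h => hne (congrArg (fun y : Vsub p => y.val.1) h).symm, by ring, by ring⟩, rfl⟩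

theorem Gp.ncard_sub_one_le_ncard_neighborSet {p : ℕ} (x : Vsub p) :
    (Svertex p).ncard - 1 ≤ ((Gp p).neighborSet x).ncard :=
  calc (Svertex p).ncard - 1 = (Svertex p \ {x.val.1}).ncard :=
        (Set.ncard_sdiff_singleton_of_mem x.prop).symm
    _ ≤ ((fun y : Vsub p => y.val.1) '' (Gp p).neighborSet x).ncard :=
        Set.ncard_le_ncard fun _ ⟨hs, hne⟩ => Gp.exists_adj_fst_eq x hs hne
    _ ≤ ((Gp p).neighborSet x).ncard := Set.ncard_image_le

theorem stmt_2_general (p : ℕ) :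
    (∀ v : Vsub p, (Svertex p).ncard - 1 ≤ ((Gp p).neighborSet v).ncard) ∧
    (Svertex p).ncard * ((Svertex p).ncard - 1) * p ^ 2 / 2 ≤ ((Gp p).edgeSet).ncard := by
  refine ⟨Gp.ncard_sub_one_le_ncard_neighborSet, Nat.div_le_of_le_mul ?_⟩
  have := (Gp p).card_mul_le_two_mul_ncard_edgeSet Gp.ncard_sub_one_le_ncard_neighborSet
  rw [Vsub.natCard_eq] at this
  linarith

theorem stmt_2 (p : ℕ) (hp : p.Prime) (h5 : p % 6 = 5) (h11 : 11 < p) :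
    (∀ v : Vsub p, (Svertex p).ncard - 1 ≤ ((Gp p).neighborSet v).ncard) ∧
    (Svertex p).ncard * ((Svertex p).ncard - 1) * p ^ 2 / 2 ≤ ((Gp p).edgeSet).ncard :=
  stmt_2_general p
end

section
/- Let a, b, c ∈ V be pairwise distinct and let x, y, z, w ∈ V be pairwise distinct such that ax, xw, by, yw, cz, zw are all edges of G_p. Then: (1) if a₁ = b₁ then a₂ ≠ b₂ and a₃ ≠ b₃; (2) if a₁ = c₁ then a₂ ≠ c₂ and a₃ ≠ c₃; (3) if b₁ = c₁ then b₂ ≠ c₂ and b₃ ≠ c₃. -/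
/-!
Along the paths `a – x – w` and `b – y – w` with `a₁ = b₁`, subtracting the adjacency equations
gives `a₂ - b₂ = (a₁ - w₁)(x₁² - y₁²)` and `a₃ - b₃ = (a₁² - w₁²)(x₁ - y₁)`.
Both right-hand sides are nonzero in `F_p`: two distinct common neighbours of a vertex have
distinct first coordinates (so `x₁ ≠ y₁` and `a₁ ≠ w₁`), and two elements of `S` are smaller
than `p / 2`, so neither `x₁ + y₁` nor `a₁ + w₁` vanishes.
-/

lemma Svertex.add_ne_zero {p : ℕ} {u v : ZMod p} (hu : u ∈ Svertex p) (hv : v ∈ Svertex p) :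
    u + v ≠ 0 := by
  obtain ⟨hu1, hu2, -⟩ := hu
  obtain ⟨hv1, hv2, -⟩ := hv
  rcases Nat.eq_zero_or_pos p with rfl | hp
  · omega
  have : NeZero p := ⟨hp.ne'⟩
  intro h
  have hval : (u + v).val = 0 := by rw [h, ZMod.val_zero]
  rw [ZMod.val_add, Nat.mod_eq_of_lt (by omega)] at hval
  omega

lemma Svertex.ne_neg {p : ℕ} {u v : ZMod p} (hu : u ∈ Svertex p) (hv : v ∈ Svertex p) :
    u ≠ -v :=
  fun h => Svertex.add_ne_zero hu hv (eq_neg_iff_add_eq_zero.mp h)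

lemma Svertex.sq_ne_sq {p : ℕ} [Fact p.Prime] {u v : ZMod p} (hu : u ∈ Svertex p)
    (hv : v ∈ Svertex p) (huv : u ≠ v) : u ^ 2 ≠ v ^ 2 := by
  rw [Ne, sq_eq_sq_iff_eq_or_eq_neg, not_or]
  exact ⟨huv, Svertex.ne_neg hu hv⟩

namespace Gp

variable {p : ℕ}

lemma eq_of_adj_of_adj_of_fst_eq {u v t : Vsub p} (hu : (Gp p).Adj u t) (hv : (Gp p).Adj v t)
    (h1 : u.val.1 = v.val.1) : u = v := by
  obtain ⟨-, e1, e2⟩ := hu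
  obtain ⟨-, e3, e4⟩ := hv
  refine Subtype.ext (Prod.ext h1 (Prod.ext ?_ ?_))
  · exact add_right_cancel (b := t.val.2.2) (by rw [e1, e3, h1])
  · exact add_right_cancel (b := t.val.2.1) (by rw [e2, e4, h1])

lemma fst_ne_of_adj_of_adj {u v t : Vsub p} (hu : (Gp p).Adj u t) (hv : (Gp p).Adj v t)
    (huv : u ≠ v) : u.val.1 ≠ v.val.1 :=
  fun h => huv (eq_of_adj_of_adj_of_fst_eq hu hv h)

section TwoPaths

variable {a b x y w : Vsub p}

lemma snd_sub_snd_of_fst_eq (hax : (Gp p).Adj a x) (hxw : (Gp p).Adj x w)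
    (hby : (Gp p).Adj b y) (hyw : (Gp p).Adj y w) (h1 : a.val.1 = b.val.1) :
    a.val.2.1 - b.val.2.1 = (a.val.1 - w.val.1) * (x.val.1 ^ 2 - y.val.1 ^ 2) := by
  obtain ⟨-, e1, -⟩ := hax
  obtain ⟨-, -, e4⟩ := hxw
  obtain ⟨-, e5, -⟩ := hby
  obtain ⟨-, -, e8⟩ := hyw
  linear_combination e1 - e5 - e4 + e8 + y.val.1 ^ 2 * h1

lemma thd_sub_thd_of_fst_eq (hax : (Gp p).Adj a x) (hxw : (Gp p).Adj x w)
    (hby : (Gp p).Adj b y) (hyw : (Gp p).Adj y w) (h1 : a.val.1 = b.val.1) :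
    a.val.2.2 - b.val.2.2 = (a.val.1 ^ 2 - w.val.1 ^ 2) * (x.val.1 - y.val.1) := by
  obtain ⟨-, -, e2⟩ := hax
  obtain ⟨-, e3, -⟩ := hxw
  obtain ⟨-, -, e6⟩ := hby
  obtain ⟨-, e7, -⟩ := hyw
  linear_combination e2 - e6 - e3 + e7 + y.val.1 * (a.val.1 + b.val.1) * h1

lemma fst_ne_of_paths_of_fst_eq (hax : (Gp p).Adj a x) (hxw : (Gp p).Adj x w)
    (hby : (Gp p).Adj b y) (hyw : (Gp p).Adj y w) (h1 : a.val.1 = b.val.1)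
    (hab : a ≠ b) : a.val.1 ≠ w.val.1 := fun h =>
  hab ((eq_of_adj_of_adj_of_fst_eq hax hxw.symm h).trans
    (eq_of_adj_of_adj_of_fst_eq hby hyw.symm (h1 ▸ h)).symm)

lemma snd_ne_and_thd_ne_of_fst_eq [Fact p.Prime] (hax : (Gp p).Adj a x) (hxw : (Gp p).Adj x w)
    (hby : (Gp p).Adj b y) (hyw : (Gp p).Adj y w) (h1 : a.val.1 = b.val.1)
    (hab : a ≠ b) (hxy : x ≠ y) :
    a.val.2.1 ≠ b.val.2.1 ∧ a.val.2.2 ≠ b.val.2.2 := by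
  have hxy1 : x.val.1 ≠ y.val.1 := fst_ne_of_adj_of_adj hxw hyw hxy
  have haw1 : a.val.1 ≠ w.val.1 := fst_ne_of_paths_of_fst_eq hax hxw hby hyw h1 hab
  constructor
  · rw [Ne, ← sub_eq_zero, snd_sub_snd_of_fst_eq hax hxw hby hyw h1]
    exact mul_ne_zero (sub_ne_zero.mpr haw1) (sub_ne_zero.mpr (Svertex.sq_ne_sq x.2 y.2 hxy1))
  · rw [Ne, ← sub_eq_zero, thd_sub_thd_of_fst_eq hax hxw hby hyw h1]
    exact mul_ne_zero (sub_ne_zero.mpr (Svertex.sq_ne_sq a.2 w.2 haw1)) (sub_ne_zero.mpr hxy1)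

end TwoPaths

end Gp

theorem stmt_3_general (p : ℕ) (hp : p.Prime)
    (a b c x y z w : Vsub p)
    (habc : [a, b, c].Pairwise (· ≠ ·))
    (hxyzw : [x, y, z, w].Pairwise (· ≠ ·))
    (hax : (Gp p).Adj a x) (hxw : (Gp p).Adj x w)
    (hby : (Gp p).Adj b y) (hyw : (Gp p).Adj y w)
    (hcz : (Gp p).Adj c z) (hzw : (Gp p).Adj z w) :
    (a.val.1 = b.val.1 → a.val.2.1 ≠ b.val.2.1 ∧ a.val.2.2 ≠ b.val.2.2) ∧
    (a.val.1 = c.val.1 → a.val.2.1 ≠ c.val.2.1 ∧ a.val.2.2 ≠ c.val.2.2) ∧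
    (b.val.1 = c.val.1 → b.val.2.1 ≠ c.val.2.1 ∧ b.val.2.2 ≠ c.val.2.2) := by
  have : Fact p.Prime := ⟨hp⟩
  obtain ⟨⟨hab, hac⟩, hbc⟩ : (a ≠ b ∧ a ≠ c) ∧ b ≠ c := by simpa using habc
  obtain ⟨⟨hxy, hxz, -⟩, ⟨hyz, -⟩, -⟩ : (x ≠ y ∧ x ≠ z ∧ x ≠ w) ∧ (y ≠ z ∧ y ≠ w) ∧ z ≠ w := by
    simpa using hxyzw
  exact ⟨fun h1 => Gp.snd_ne_and_thd_ne_of_fst_eq hax hxw hby hyw h1 hab hxy,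
    fun h1 => Gp.snd_ne_and_thd_ne_of_fst_eq hax hxw hcz hzw h1 hac hxz,
    fun h1 => Gp.snd_ne_and_thd_ne_of_fst_eq hby hyw hcz hzw h1 hbc hyz⟩

theorem stmt_3 (p : ℕ) (hp : p.Prime) (h5 : p % 6 = 5) (h11 : 11 < p)
    (a b c x y z w : Vsub p)
    (habc : [a, b, c].Pairwise (· ≠ ·))
    (hxyzw : [x, y, z, w].Pairwise (· ≠ ·))
    (hax : (Gp p).Adj a x) (hxw : (Gp p).Adj x w)
    (hby : (Gp p).Adj b y) (hyw : (Gp p).Adj y w)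
    (hcz : (Gp p).Adj c z) (hzw : (Gp p).Adj z w) :
    (a.val.1 = b.val.1 → a.val.2.1 ≠ b.val.2.1 ∧ a.val.2.2 ≠ b.val.2.2) ∧
    (a.val.1 = c.val.1 → a.val.2.1 ≠ c.val.2.1 ∧ a.val.2.2 ≠ c.val.2.2) ∧
    (b.val.1 = c.val.1 → b.val.2.1 ≠ c.val.2.1 ∧ b.val.2.2 ≠ c.val.2.2) :=
  stmt_3_general p hp a b c x y z w habc hxyzw hax hxw hby hyw hcz hzw
end

section
/- The graph G_q contains no copy of the theta graph θ_{4,3}: there do not exist pairwise distinct vertices a, b, u, v, w, x, y, z, d, e, f ∈ F_q⁴ such that au, uv, vw, wb, ax, xy, yz, zb, ad, de, ef, fb are all edges of G_q. -/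
/-!
Along a walk `a – p – r – t – b` in `Gq F`, the alternating sum of the twelve adjacency
equations eliminates every coordinate of the inner vertices except their first ones
`s = p.1`, `r = r.1`, `t = t.1`, leaving three equations (`WalkEqns`) whose coefficients depend
only on `α = a.1`, `β = b.1` and `c = b.2 - a.2`. A vertex's neighbours are determined by their
first coordinates, so the three paths of a `θ_{4,3}` give three solutions with pairwise distinct
`s` and pairwise distinct `t`.

If `α ≠ β`, eliminating `s` and `t` leaves a quadratic equation in `r`, and the middle coordinates
of the three paths are distinct roots of it; hence its constant term vanishes, and then every
path has `r = β` or `(β - α) t = c.1`, which at most two of the paths can satisfy. If `α = β`, two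
paths already force `c = 0` as soon as `2 ≠ 0`, i.e. `a = b`.
-/

/-- The graph `G_q` on `F_q⁴`: distinct vertices `u, v` are adjacent iff
`u₂ + v₂ = u₁·v₁`, `u₃ + v₄ = u₁·v₁²` and `u₄ + v₃ = u₁²·v₁`. -/
def Gq (F : Type*) [Field F] : SimpleGraph (F × F × F × F) where
  Adj u v := u ≠ v ∧ u.2.1 + v.2.1 = u.1 * v.1 ∧
    u.2.2.1 + v.2.2.2 = u.1 * v.1 ^ 2 ∧ u.2.2.2 + v.2.2.1 = u.1 ^ 2 * v.1
  symm := by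
    constructor
    rintro u v ⟨hne, h1, h2, h3⟩
    exact ⟨hne.symm, by linear_combination h1, by linear_combination h3,
      by linear_combination h2⟩
  loopless := ⟨fun u h => h.1 rfl⟩

section

variable {F : Type*} [Field F]

theorem Gq_injOn_fst_neighborSet (a : F × F × F × F) :
    Set.InjOn Prod.fst ((Gq F).neighborSet a) := by
  rintro ⟨p₁, p₂, p₃, p₄⟩ ⟨-, hp₂, hp₃, hp₄⟩ ⟨q₁, q₂, q₃, q₄⟩ ⟨-, hq₂, hq₃, hq₄⟩ (h : p₁ = q₁)
  subst h
  obtain rfl : p₂ = q₂ := by linear_combination hp₂ - hq₂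
  obtain rfl : p₃ = q₃ := by linear_combination hp₄ - hq₄
  obtain rfl : p₄ = q₄ := by linear_combination hp₃ - hq₃
  rfl

/-- The relations left between the first coordinates `s, r, t` of the inner vertices of a walk
`a – p – r – t – b` in `Gq F`, where `α = a.1`, `β = b.1` and `c = b.2 - a.2`. -/
structure WalkEqns (α β : F) (c : F × F × F) (s r t : F) : Prop where
  eq₁ : t * (β - r) + s * (r - α) = c.1
  eq₂ : t ^ 2 * (β - r) + s ^ 2 * (r - α) = c.2.1
  eq₃ : t * (β ^ 2 - r ^ 2) + s * (r ^ 2 - α ^ 2) = c.2.2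

theorem Gq_walkEqns {a p r t b : F × F × F × F} (hap : (Gq F).Adj a p) (hpr : (Gq F).Adj p r)
    (hrt : (Gq F).Adj r t) (htb : (Gq F).Adj t b) :
    WalkEqns a.1 b.1 (b.2 - a.2) p.1 r.1 t.1 := by
  obtain ⟨-, hap₂, hap₃, hap₄⟩ := hap
  obtain ⟨-, hpr₂, hpr₃, hpr₄⟩ := hpr
  obtain ⟨-, hrt₂, hrt₃, hrt₄⟩ := hrt
  obtain ⟨-, htb₂, htb₃, htb₄⟩ := htb
  refine ⟨?_, ?_, ?_⟩ <;> simp only [Prod.fst_sub, Prod.snd_sub]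
  · linear_combination hap₂ - hpr₂ + hrt₂ - htb₂
  · linear_combination hap₃ - hpr₄ + hrt₃ - htb₄
  · linear_combination hap₄ - hpr₃ + hrt₄ - htb₃

theorem const_eq_zero_of_three_roots {K M α β x₁ x₂ x₃ : F} (h₁₂ : x₁ ≠ x₂) (h₁₃ : x₁ ≠ x₃)
    (h₂₃ : x₂ ≠ x₃) (h₁ : K * (x₁ - α) * (x₁ - β) + M = 0) (h₂ : K * (x₂ - α) * (x₂ - β) + M = 0)
    (h₃ : K * (x₃ - α) * (x₃ - β) + M = 0) : M = 0 := by
  rcases eq_or_ne K 0 with rfl | hK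
  · simpa using h₁
  have sum_eq (i j : F) (hij : i ≠ j) (hi : K * (i - α) * (i - β) + M = 0)
      (hj : K * (j - α) * (j - β) + M = 0) : i + j = α + β := by
    have : K * (i - j) * (i + j - (α + β)) = 0 := by linear_combination hi - hj
    simpa [hK, sub_eq_zero, hij] using this
  exact absurd (add_left_cancel ((sum_eq _ _ h₁₂ h₁ h₂).trans (sum_eq _ _ h₁₃ h₁ h₃).symm)) h₂₃

namespace WalkEqns

variable {α β : F} {c : F × F × F} {s r t s' r' t' : F}

theorem mul_last (h : WalkEqns α β c s r t) :
    (β - α) * (t * (β - r)) = c.2.2 - (α + r) * c.1 := by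
  linear_combination h.eq₃ - (α + r) * h.eq₁

theorem mul_first (h : WalkEqns α β c s r t) :
    (β - α) * (s * (r - α)) = (β + r) * c.1 - c.2.2 := by
  linear_combination (β + r) * h.eq₁ - h.eq₃

theorem mid_ne (hαβ : α ≠ β) (h : WalkEqns α β c s r t) (h' : WalkEqns α β c s' r' t')
    (hs : s ≠ s') (ht : t ≠ t') : r ≠ r' := by
  rintro rfl
  have hD : β - α ≠ 0 := sub_ne_zero.mpr hαβ.symm
  have hβ : (t - t') * (β - r) = 0 :=
    mul_left_cancel₀ hD (by linear_combination h.mul_last - h'.mul_last)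
  have hα : (s - s') * (r - α) = 0 :=
    mul_left_cancel₀ hD (by linear_combination h.mul_first - h'.mul_first)
  simp only [mul_eq_zero, sub_eq_zero, ht, hs, false_or] at hβ hα
  exact hαβ (hα.symm.trans hβ.symm)

/-- Eliminating `s` and `t`: the cubic terms in `r` cancel. -/
theorem quadratic (h : WalkEqns α β c s r t) :
    (β - α) * (((β - α) * c.2.1 - c.1 ^ 2) * (r - α) * (r - β) + ((α + β) * c.1 - c.2.2) ^ 2)
      = 0 := by
  linear_combination (-((β - α) * (t * (β - r)) + (c.2.2 - (α + r) * c.1)) * (r - α)) * h.mul_last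
    - ((β - α) * (s * (r - α)) + ((β + r) * c.1 - c.2.2)) * (β - r) * h.mul_first
    + (β - α) ^ 2 * (β - r) * (r - α) * h.eq₂

theorem mid_eq_or_mul_last_eq (h : WalkEqns α β c s r t) (hc : (α + β) * c.1 = c.2.2) :
    r = β ∨ (β - α) * t = c.1 := by
  have : (β - r) * ((β - α) * t - c.1) = 0 := by linear_combination h.mul_last - hc
  simpa [sub_eq_zero, eq_comm] using this

theorem left_eq_right_of_three {s₁ r₁ t₁ s₂ r₂ t₂ s₃ r₃ t₃ : F}
    (h₁ : WalkEqns α β c s₁ r₁ t₁) (h₂ : WalkEqns α β c s₂ r₂ t₂) (h₃ : WalkEqns α β c s₃ r₃ t₃)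
    (hs₁₂ : s₁ ≠ s₂) (hs₁₃ : s₁ ≠ s₃) (hs₂₃ : s₂ ≠ s₃)
    (ht₁₂ : t₁ ≠ t₂) (ht₁₃ : t₁ ≠ t₃) (ht₂₃ : t₂ ≠ t₃) : α = β := by
  by_contra hαβ
  have hD : β - α ≠ 0 := sub_ne_zero.mpr (Ne.symm hαβ)
  have hr₁₂ := h₁.mid_ne hαβ h₂ hs₁₂ ht₁₂
  have hr₁₃ := h₁.mid_ne hαβ h₃ hs₁₃ ht₁₃
  have hr₂₃ := h₂.mid_ne hαβ h₃ hs₂₃ ht₂₃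
  have hM := const_eq_zero_of_three_roots hr₁₂ hr₁₃ hr₂₃
    ((mul_eq_zero.mp h₁.quadratic).resolve_left hD) ((mul_eq_zero.mp h₂.quadratic).resolve_left hD)
    ((mul_eq_zero.mp h₃.quadratic).resolve_left hD)
  have hc : (α + β) * c.1 = c.2.2 := sub_eq_zero.mp (pow_eq_zero_iff two_ne_zero |>.mp hM)
  have ht (i j : F) (hi : (β - α) * i = c.1) (hj : (β - α) * j = c.1) : i = j :=
    mul_left_cancel₀ hD (hi.trans hj.symm)
  rcases h₁.mid_eq_or_mul_last_eq hc with h₁ | h₁ <;>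
    rcases h₂.mid_eq_or_mul_last_eq hc with h₂ | h₂ <;>
    rcases h₃.mid_eq_or_mul_last_eq hc with h₃ | h₃
  all_goals first
    | exact hr₁₂ (h₁.trans h₂.symm) | exact hr₁₃ (h₁.trans h₃.symm)
    | exact hr₂₃ (h₂.trans h₃.symm) | exact ht₁₂ (ht _ _ h₁ h₂)
    | exact ht₁₃ (ht _ _ h₁ h₃) | exact ht₂₃ (ht _ _ h₂ h₃)

theorem eq_zero_of_left_eq_right (two_ne_zero : (2 : F) ≠ 0) (h : WalkEqns α α c s r t)
    (h' : WalkEqns α α c s' r' t') (ht : t ≠ t') : c = 0 := by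
  have h₁ : (t - s) * (α - r) = c.1 := by linear_combination h.eq₁
  have h₂ : (t + s) * c.1 = c.2.1 := by linear_combination h.eq₂ - (t + s) * h₁
  have h₃ : (α + r) * c.1 = c.2.2 := by linear_combination h.eq₃ - (α + r) * h₁
  have h₁' : (t' - s') * (α - r') = c.1 := by linear_combination h'.eq₁
  have h₂' : (t' + s') * c.1 = c.2.1 := by linear_combination h'.eq₂ - (t' + s') * h₁'
  have h₃' : (α + r') * c.1 = c.2.2 := by linear_combination h'.eq₃ - (α + r') * h₁'
  rcases eq_or_ne c.1 0 with hc₁ | hc₁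
  · ext <;> simp [hc₁, ← h₂, ← h₃]
  exfalso
  obtain rfl : r = r' := add_left_cancel (mul_right_cancel₀ hc₁ (h₃.trans h₃'.symm))
  have hαr : α - r ≠ 0 := fun h ↦ hc₁ (by rw [← h₁, h, mul_zero])
  have hdiff : t - s = t' - s' := mul_right_cancel₀ hαr (h₁.trans h₁'.symm)
  have hsum : t + s = t' + s' := mul_right_cancel₀ hc₁ (h₂.trans h₂'.symm)
  exact ht (mul_left_cancel₀ two_ne_zero (by linear_combination hdiff + hsum))

end WalkEqns

end

theorem stmt_12 (F : Type*) [Field F] [Fintype F] (hodd : Odd (Fintype.card F)) :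
    ¬ ∃ a b u v w x y z d e f : F × F × F × F,
      [a, b, u, v, w, x, y, z, d, e, f].Pairwise (· ≠ ·) ∧
      (Gq F).Adj a u ∧ (Gq F).Adj u v ∧ (Gq F).Adj v w ∧ (Gq F).Adj w b ∧
      (Gq F).Adj a x ∧ (Gq F).Adj x y ∧ (Gq F).Adj y z ∧ (Gq F).Adj z b ∧
      (Gq F).Adj a d ∧ (Gq F).Adj d e ∧ (Gq F).Adj e f ∧ (Gq F).Adj f b := by
  rintro ⟨a, b, u, v, w, x, y, z, d, e, f, hpw,
    hau, huv, hvw, hwb, hax, hxy, hyz, hzb, had, hde, hef, hfb⟩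
  simp only [List.pairwise_cons, List.mem_cons, List.not_mem_nil, forall_eq_or_imp] at hpw
  obtain ⟨⟨hab, -⟩, -, ⟨-, -, hux, -, -, hud, -⟩, -, ⟨-, -, hwz, -, -, hwf, -⟩,
    ⟨-, -, hxd, -⟩, -, ⟨-, -, hzf, -⟩, -⟩ := hpw
  have two_ne_zero : (2 : F) ≠ 0 := Ring.two_ne_zero fun h ↦ by
    simpa [Nat.odd_iff.mp hodd] using FiniteField.even_card_iff_char_two.mp h
  have hu := Gq_walkEqns hau huv hvw hwb
  have hx := Gq_walkEqns hax hxy hyz hzb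
  have hd := Gq_walkEqns had hde hef hfb
  have injOn_a := Gq_injOn_fst_neighborSet a
  have injOn_b := Gq_injOn_fst_neighborSet b
  have hfst : a.1 = b.1 := hu.left_eq_right_of_three hx hd
    (injOn_a.ne hau hax hux) (injOn_a.ne hau had hud) (injOn_a.ne hax had hxd)
    (injOn_b.ne hwb.symm hzb.symm hwz) (injOn_b.ne hwb.symm hfb.symm hwf)
    (injOn_b.ne hzb.symm hfb.symm hzf)
  rw [← hfst] at hu hx
  exact hab (Prod.ext hfst (sub_eq_zero.mp (hu.eq_zero_of_left_eq_right two_ne_zero hx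
    (injOn_b.ne hwb.symm hzb.symm hwz))).symm)
end
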